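/- arXiv:math/0611432 — 2 statements merged into one kernel-verified Lean document; each statement's English description precedes it below -/
import Mathlib

section
/- Let C > 0 and assume ν̄(x) ~ C x^{−2} as x → ∞. Then for every y ≥ 0, lim_{t→(1/m)⁻} L_t (1−mt)^{−2} Ψ^{(t)}((1−mt) y / L_t) = −y − (C/m) y², where L_t = log(1/(1−mt)). -/
/-!
Layer cake: `∫ (1 - e^{-ρl}) ν(dl) = ρ m - ρ ∫_0^∞ (1 - e^{-ρx}) ν̄(x) dx`, so
`Ψ^(t)(ρ) = -(1 - mt) ρ - t ρ T(ρ)` with `T(ρ) = ∫_0^∞ (1 - e^{-ρx}) ν̄(x) dx`.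
If `x² ν̄(x) → C` then `T(ρ) ~ C ρ log(1/ρ)` as `ρ → 0+`: the part of `T` over `(0, M]` is `O(ρ)`,
on `(M, ∞)` the tail is within `δ x⁻²` of `C x⁻²`, and
`∫_M^∞ (1 - e^{-ρx}) x⁻² dx = ρ log(1/(ρM)) + O(ρ)` by scaling `u = ρx`.
At `ρ = (1 - mt) y / L_t` one has `ρ log(1/ρ) ~ (1 - mt) y`, and the limit follows.
-/

open MeasureTheory Filter

/-- The Laplace exponent `Ψ^(t)(ρ) = -ρ + t ∫_0^∞ (1 - e^{-ρ l}) ν(dl)`. -/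
noncomputable def Psi (ν : Measure ℝ) (t ρ : ℝ) : ℝ :=
  -ρ + t * ∫ l, (1 - Real.exp (-(ρ * l))) ∂ν

open Set Real Topology

namespace Real

lemma one_sub_exp_neg_nonneg {u : ℝ} (hu : 0 ≤ u) : 0 ≤ 1 - exp (-u) := by
  linarith [exp_le_one_iff.2 (neg_nonpos.2 hu)]

lemma one_sub_exp_neg_le_one (u : ℝ) : 1 - exp (-u) ≤ 1 := by
  linarith [exp_pos (-u)]

lemma one_sub_exp_neg_le_self (u : ℝ) : 1 - exp (-u) ≤ u := by
  linarith [add_one_le_exp (-u)]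

lemma sub_sq_le_one_sub_exp_neg {u : ℝ} (hu₀ : 0 ≤ u) (hu₁ : u ≤ 1) :
    u - u ^ 2 ≤ 1 - exp (-u) := by
  have h := abs_exp_sub_one_sub_id_le (x := -u) (by rwa [abs_neg, abs_of_nonneg hu₀])
  linarith [(abs_le.1 h).2, neg_sq u]

lemma abs_one_sub_exp_neg_le_one {u : ℝ} (hu : 0 ≤ u) : |1 - exp (-u)| ≤ 1 := by
  rw [abs_of_nonneg (one_sub_exp_neg_nonneg hu)]
  exact one_sub_exp_neg_le_one u

lemma abs_one_sub_exp_neg_le_self {u : ℝ} (hu : 0 ≤ u) : |1 - exp (-u)| ≤ u := by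
  rw [abs_of_nonneg (one_sub_exp_neg_nonneg hu)]
  exact one_sub_exp_neg_le_self u

lemma tendsto_log_one_div_nhdsGT_zero : Tendsto (fun ρ : ℝ => log (1 / ρ)) (𝓝[>] 0) atTop := by
  simpa only [one_div, Function.comp_def] using tendsto_log_atTop.comp tendsto_inv_nhdsGT_zero

end Real

lemma MeasureTheory.IntegrableOn.one_sub_exp_neg_mul_mul {w : ℝ → ℝ} {ρ a : ℝ}
    (hw : IntegrableOn w (Ioi a)) (hρ : 0 ≤ ρ) (ha : 0 ≤ a) :
    IntegrableOn (fun x => (1 - exp (-(ρ * x))) * w x) (Ioi a) := by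
  refine hw.bdd_mul (c := 1) (by fun_prop) ?_
  filter_upwards [ae_restrict_mem measurableSet_Ioi] with x (hx : a < x)
  exact abs_one_sub_exp_neg_le_one (mul_nonneg hρ (ha.trans hx.le))

lemma integrableOn_one_sub_exp_neg_mul_rpow_neg_two {a : ℝ} (ha : 0 < a) :
    IntegrableOn (fun u => (1 - exp (-u)) * u ^ (-2 : ℝ)) (Ioi a) := by
  simpa only [one_mul] using
    (integrableOn_Ioi_rpow_of_lt (a := -2) (by norm_num) ha).one_sub_exp_neg_mul_mul
      zero_le_one ha.le

lemma intervalIntegral_one_sub_exp_neg_mul_rpow_neg_two_mem_Icc {a : ℝ} (ha₀ : 0 < a)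
    (ha₁ : a ≤ 1) :
    ∫ u in a..1, (1 - exp (-u)) * u ^ (-2 : ℝ) ∈ Icc (log (1 / a) - 1) (log (1 / a)) := by
  have hk : ∀ u > 0, (1 - exp (-u)) * u ^ (-2 : ℝ) = (1 - exp (-u)) / u ^ 2 := fun u hu => by
    rw [rpow_neg hu.le, rpow_two, div_eq_mul_inv]
  have hk_int : IntervalIntegrable (fun u => (1 - exp (-u)) * u ^ (-2 : ℝ)) volume a 1 :=
    (intervalIntegrable_iff_integrableOn_Ioc_of_le ha₁).2
      ((integrableOn_one_sub_exp_neg_mul_rpow_neg_two ha₀).mono_set Ioc_subset_Ioi_self)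
  have hinv_int : IntervalIntegrable (fun u : ℝ => u⁻¹) volume a 1 :=
    intervalIntegral.intervalIntegrable_inv
      (fun u hu => ((uIcc_of_le ha₁ ▸ hu).1.trans_lt' ha₀).ne') continuousOn_id
  have hinv : ∫ u in a..1, u⁻¹ = log (1 / a) := integral_inv_of_pos ha₀ one_pos
  constructor
  · have h : ∫ u in a..1, (u⁻¹ - 1) ≤ ∫ u in a..1, (1 - exp (-u)) * u ^ (-2 : ℝ) := by
      refine intervalIntegral.integral_mono_on ha₁ (hinv_int.sub intervalIntegrable_const)
        hk_int fun u hu => ?_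
      have hu₀ : 0 < u := ha₀.trans_le hu.1
      rw [hk u hu₀, le_div_iff₀ (by positivity)]
      have := sub_sq_le_one_sub_exp_neg hu₀.le hu.2
      field_simp
      nlinarith
    rw [intervalIntegral.integral_sub hinv_int intervalIntegrable_const, hinv,
      intervalIntegral.integral_const, smul_eq_mul, mul_one] at h
    linarith
  · rw [← hinv]
    refine intervalIntegral.integral_mono_on ha₁ hk_int hinv_int fun u hu => ?_
    have hu₀ : 0 < u := ha₀.trans_le hu.1
    calc (1 - exp (-u)) * u ^ (-2 : ℝ) = (1 - exp (-u)) / u ^ 2 := hk u hu₀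
      _ ≤ u / u ^ 2 := by gcongr; exact one_sub_exp_neg_le_self u
      _ = u⁻¹ := by field_simp

lemma integral_Ioi_one_one_sub_exp_neg_mul_rpow_neg_two_mem_Icc :
    ∫ u in Ioi 1, (1 - exp (-u)) * u ^ (-2 : ℝ) ∈ Icc 0 1 := by
  refine ⟨setIntegral_nonneg measurableSet_Ioi fun u (hu : 1 < u) =>
    mul_nonneg (one_sub_exp_neg_nonneg (by linarith)) (rpow_nonneg (by linarith) _), ?_⟩
  have h1 : ∫ u in Ioi (1 : ℝ), u ^ (-2 : ℝ) = 1 := by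
    rw [integral_Ioi_rpow_of_lt (by norm_num) one_pos]; norm_num
  refine (setIntegral_mono_on (integrableOn_one_sub_exp_neg_mul_rpow_neg_two one_pos)
    (integrableOn_Ioi_rpow_of_lt (by norm_num) one_pos) measurableSet_Ioi
    fun u (hu : 1 < u) => ?_).trans_eq h1
  exact mul_le_of_le_one_left (rpow_nonneg (by linarith) _) (one_sub_exp_neg_le_one u)

lemma abs_integral_one_sub_exp_neg_mul_rpow_neg_two_sub_log_le {a : ℝ} (ha₀ : 0 < a)
    (ha₁ : a ≤ 1) :
    |(∫ u in Ioi a, (1 - exp (-u)) * u ^ (-2 : ℝ)) - log (1 / a)| ≤ 1 := by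
  have hk := integrableOn_one_sub_exp_neg_mul_rpow_neg_two ha₀
  have hsplit : ∫ u in Ioi a, (1 - exp (-u)) * u ^ (-2 : ℝ)
      = (∫ u in a..1, (1 - exp (-u)) * u ^ (-2 : ℝ))
        + ∫ u in Ioi 1, (1 - exp (-u)) * u ^ (-2 : ℝ) := by
    rw [intervalIntegral.integral_of_le ha₁, ← setIntegral_union (Ioc_disjoint_Ioi le_rfl)
      measurableSet_Ioi (hk.mono_set Ioc_subset_Ioi_self) (hk.mono_set (Ioi_subset_Ioi ha₁)),
      Ioc_union_Ioi_eq_Ioi ha₁]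
  obtain ⟨hhead₁, hhead₂⟩ := intervalIntegral_one_sub_exp_neg_mul_rpow_neg_two_mem_Icc ha₀ ha₁
  obtain ⟨htail₁, htail₂⟩ := integral_Ioi_one_one_sub_exp_neg_mul_rpow_neg_two_mem_Icc
  rw [hsplit, abs_le]
  constructor <;> linarith

lemma abs_integral_one_sub_exp_neg_mul_mul_rpow_neg_two_sub_le {ρ M : ℝ} (hρ : 0 < ρ)
    (hM : 0 < M) (hρM : ρ * M ≤ 1) :
    |(∫ x in Ioi M, (1 - exp (-(ρ * x))) * x ^ (-2 : ℝ)) - ρ * log (1 / (ρ * M))| ≤ ρ := by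
  have hscale : ∫ x in Ioi M, (1 - exp (-(ρ * x))) * x ^ (-2 : ℝ)
      = ρ * ∫ u in Ioi (ρ * M), (1 - exp (-u)) * u ^ (-2 : ℝ) := by
    rw [← integral_comp_mul_left_Ioi' (fun u => (1 - exp (-u)) * u ^ (-2 : ℝ)) M hρ,
      smul_eq_mul, ← integral_const_mul, ← integral_const_mul]
    refine setIntegral_congr_fun measurableSet_Ioi fun x (hx : M < x) => ?_
    rw [mul_rpow hρ.le (hM.trans hx).le, rpow_neg hρ.le, rpow_two]
    field_simp
  rw [hscale, ← mul_sub, abs_mul, abs_of_pos hρ]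
  exact mul_le_of_le_one_right hρ.le
    (abs_integral_one_sub_exp_neg_mul_rpow_neg_two_sub_log_le (by positivity) hρM)

section Transform

variable {w : ℝ → ℝ} {ρ : ℝ}

lemma abs_setIntegral_Ioc_one_sub_exp_neg_mul_mul_le (hw : IntegrableOn w (Ioi 0))
    (hρ : 0 ≤ ρ) {M : ℝ} (hM : 0 ≤ M) :
    |∫ x in Ioc 0 M, (1 - exp (-(ρ * x))) * w x| ≤ ρ * M * ∫ x in Ioi 0, |w x| := by
  have hw' : IntegrableOn w (Ioc 0 M) := hw.mono_set Ioc_subset_Ioi_self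
  calc |∫ x in Ioc 0 M, (1 - exp (-(ρ * x))) * w x|
      ≤ ∫ x in Ioc 0 M, ρ * M * |w x| := by
        rw [← norm_eq_abs]
        refine norm_integral_le_of_norm_le (hw'.abs.const_mul _) ?_
        filter_upwards [ae_restrict_mem measurableSet_Ioc] with x ⟨hx₀, hxM⟩
        rw [norm_mul, norm_eq_abs, norm_eq_abs]
        gcongr
        exact (abs_one_sub_exp_neg_le_self (mul_nonneg hρ hx₀.le)).trans
          (mul_le_mul_of_nonneg_left hxM hρ)
    _ ≤ ρ * M * ∫ x in Ioi 0, |w x| := by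
        rw [integral_const_mul]
        exact mul_le_mul_of_nonneg_left (setIntegral_mono_set hw.abs
          (Eventually.of_forall fun x => abs_nonneg _) Ioc_subset_Ioi_self.eventuallyLE)
          (by positivity)

lemma abs_setIntegral_Ioi_one_sub_exp_neg_mul_mul_sub_le {M C δ : ℝ} (hw : IntegrableOn w (Ioi M))
    (hρ : 0 ≤ ρ) (hM : 0 < M) (hwC : ∀ x, M < x → |x ^ 2 * w x - C| ≤ δ) :
    |(∫ x in Ioi M, (1 - exp (-(ρ * x))) * w x)
        - C * ∫ x in Ioi M, (1 - exp (-(ρ * x))) * x ^ (-2 : ℝ)|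
      ≤ δ * ∫ x in Ioi M, (1 - exp (-(ρ * x))) * x ^ (-2 : ℝ) := by
  have hk :=
    (integrableOn_Ioi_rpow_of_lt (a := -2) (by norm_num) hM).one_sub_exp_neg_mul_mul hρ hM.le
  rw [← integral_const_mul, ← integral_sub
    (hw.one_sub_exp_neg_mul_mul hρ hM.le) (hk.const_mul C), ← integral_const_mul,
    ← norm_eq_abs]
  refine norm_integral_le_of_norm_le (hk.const_mul δ) ?_
  filter_upwards [ae_restrict_mem measurableSet_Ioi] with x (hx : M < x)
  have hx₀ : 0 < x := hM.trans hx
  have hexp := one_sub_exp_neg_nonneg (mul_nonneg hρ hx₀.le)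
  rw [rpow_neg hx₀.le, rpow_two, norm_eq_abs]
  calc |(1 - exp (-(ρ * x))) * w x - C * ((1 - exp (-(ρ * x))) * (x ^ 2)⁻¹)|
      = (1 - exp (-(ρ * x))) * (x ^ 2)⁻¹ * |x ^ 2 * w x - C| := by
        rw [show (1 - exp (-(ρ * x))) * w x - C * ((1 - exp (-(ρ * x))) * (x ^ 2)⁻¹)
            = (1 - exp (-(ρ * x))) * (x ^ 2)⁻¹ * (x ^ 2 * w x - C) by field_simp,
          abs_mul, abs_of_nonneg (by positivity)]
    _ ≤ (1 - exp (-(ρ * x))) * (x ^ 2)⁻¹ * δ := by gcongr; exact hwC x hx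
    _ = δ * ((1 - exp (-(ρ * x))) * (x ^ 2)⁻¹) := by ring

end Transform

section Asymptotics

variable {w : ℝ → ℝ} {C : ℝ}

lemma exists_abs_integral_one_sub_exp_neg_mul_mul_sub_le (hw : IntegrableOn w (Ioi 0))
    (htail : Tendsto (fun x => x ^ 2 * w x) atTop (𝓝 C)) {δ : ℝ} (hδ : 0 < δ) :
    ∃ K, ∀ᶠ ρ in 𝓝[>] 0, |(∫ x in Ioi 0, (1 - exp (-(ρ * x))) * w x) - C * (ρ * log (1 / ρ))|
      ≤ ρ * (δ * log (1 / ρ) + K) := by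
  obtain ⟨M₀, hM₀⟩ := eventually_atTop.1
    ((Metric.tendsto_nhds.1 htail δ hδ).mono fun x hx => (Real.dist_eq _ C ▸ hx).le)
  set M := max M₀ 1
  have hM₁ : 1 ≤ M := le_max_right _ _
  have hM : 0 < M := one_pos.trans_le hM₁
  have hwC : ∀ x, M < x → |x ^ 2 * w x - C| ≤ δ := fun x hx =>
    hM₀ x ((le_max_left _ _).trans hx.le)
  refine ⟨M * (∫ x in Ioi 0, |w x|) + δ + |C| * (1 + log M), ?_⟩
  filter_upwards [Ioo_mem_nhdsGT (one_div_pos.2 hM)] with ρ ⟨hρ, hρM⟩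
  replace hρM : ρ * M ≤ 1 := ((lt_div_iff₀ hM).1 hρM).le
  have hsplit : ∫ x in Ioi 0, (1 - exp (-(ρ * x))) * w x
      = (∫ x in Ioc 0 M, (1 - exp (-(ρ * x))) * w x)
        + ∫ x in Ioi M, (1 - exp (-(ρ * x))) * w x := by
    have h := hw.one_sub_exp_neg_mul_mul hρ.le le_rfl
    rw [← setIntegral_union (Ioc_disjoint_Ioi le_rfl) measurableSet_Ioi
      (h.mono_set Ioc_subset_Ioi_self) (h.mono_set (Ioi_subset_Ioi hM.le)),
      Ioc_union_Ioi_eq_Ioi hM.le]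
  have hhead := abs_setIntegral_Ioc_one_sub_exp_neg_mul_mul_le hw hρ.le hM.le
  have htailM := abs_setIntegral_Ioi_one_sub_exp_neg_mul_mul_sub_le
    (hw.mono_set (Ioi_subset_Ioi hM.le)) hρ.le hM hwC
  have hG := abs_integral_one_sub_exp_neg_mul_mul_rpow_neg_two_sub_le hρ hM hρM
  have hlog : log (1 / (ρ * M)) = log (1 / ρ) - log M := by
    rw [one_div, log_inv, log_mul hρ.ne' hM.ne', one_div, log_inv]; ring
  rw [hlog] at hG
  set G := ∫ x in Ioi M, (1 - exp (-(ρ * x))) * x ^ (-2 : ℝ)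
  have hlogM : 0 ≤ log M := log_nonneg hM₁
  have hCG : |C * (G - ρ * (log (1 / ρ) - log M))| ≤ |C| * ρ := by
    rw [abs_mul]; exact mul_le_mul_of_nonneg_left hG (abs_nonneg C)
  have hClogM : |C * (ρ * log M)| ≤ |C| * (ρ * log M) := by
    rw [abs_mul, abs_of_nonneg (mul_nonneg hρ.le hlogM)]
  have hδG : δ * G ≤ δ * (ρ * log (1 / ρ) + ρ) := mul_le_mul_of_nonneg_left
    (by linarith [(abs_le.1 hG).2, mul_nonneg hρ.le hlogM]) hδ.le
  rw [abs_le] at hhead htailM hCG hClogM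
  rw [hsplit, abs_le]
  constructor <;> linarith

lemma tendsto_integral_one_sub_exp_neg_mul_mul_div (hw : IntegrableOn w (Ioi 0))
    (htail : Tendsto (fun x => x ^ 2 * w x) atTop (𝓝 C)) :
    Tendsto (fun ρ => (∫ x in Ioi 0, (1 - exp (-(ρ * x))) * w x) / (ρ * log (1 / ρ)))
      (𝓝[>] 0) (𝓝 C) := by
  refine Metric.tendsto_nhds.2 fun ε hε => ?_
  obtain ⟨K, hK⟩ := exists_abs_integral_one_sub_exp_neg_mul_mul_sub_le hw htail (half_pos hε)
  filter_upwards [hK, self_mem_nhdsWithin,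
    tendsto_log_one_div_nhdsGT_zero.eventually_gt_atTop (2 * |K| / ε)]
    with ρ hρK (hρ : 0 < ρ) hL
  have hL₀ : 0 < log (1 / ρ) := lt_of_le_of_lt (by positivity) hL
  have hKL : 2 * |K| < ε * log (1 / ρ) := by rwa [div_lt_iff₀' hε] at hL
  have hden : 0 < ρ * log (1 / ρ) := mul_pos hρ hL₀
  rw [Real.dist_eq, div_sub' hden.ne', abs_div, abs_of_pos hden, div_lt_iff₀ hden, mul_comm _ C]
  linarith [mul_lt_mul_of_pos_left hKL hρ, mul_le_mul_of_nonneg_left (le_abs_self K) hρ.le]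

end Asymptotics

namespace MeasureTheory

theorem Integrable.integral_intervalIntegral_eq_integral_measureReal_lt_mul {α : Type*}
    [MeasurableSpace α] {μ : Measure α} {f : α → ℝ} {g : ℝ → ℝ} (hf : Integrable f μ)
    (hf_nn : 0 ≤ᵐ[μ] f) (hg : Continuous g) (hg_nn : ∀ t, 0 ≤ t → 0 ≤ g t) :
    ∫ ω, (∫ t in 0..f ω, g t) ∂μ = ∫ t in Ioi 0, μ.real {a | t < f a} * g t := by
  have hG_nn : 0 ≤ᵐ[μ] fun ω => ∫ t in 0..f ω, g t := hf_nn.mono fun ω hω =>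
    intervalIntegral.integral_nonneg hω fun t ht => hg_nn t ht.1
  have hG_meas : AEStronglyMeasurable (fun ω => ∫ t in 0..f ω, g t) μ :=
    ((intervalIntegral.continuous_primitive (μ := volume) (fun a b => hg.intervalIntegrable a b)
      0).measurable.comp_aemeasurable hf.aemeasurable).aestronglyMeasurable
  have htail_anti : Antitone fun t => μ {a | t < f a} := fun _ _ hst =>
    measure_mono fun _ (h : _ < _) => hst.trans_lt h
  have htail_meas : Measurable fun t => μ.real {a | t < f a} :=
    htail_anti.measurable.ennreal_toReal
  have hH_nn : 0 ≤ᵐ[volume.restrict (Ioi 0)] fun t => μ.real {a | t < f a} * g t := by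
    filter_upwards [ae_restrict_mem measurableSet_Ioi] with t (ht : 0 < t)
    exact mul_nonneg measureReal_nonneg (hg_nn t ht.le)
  rw [integral_eq_lintegral_of_nonneg_ae hG_nn hG_meas,
    integral_eq_lintegral_of_nonneg_ae hH_nn (htail_meas.mul hg.measurable).aestronglyMeasurable,
    lintegral_comp_eq_lintegral_meas_lt_mul μ hf_nn hf.aemeasurable
      (fun t _ => hg.intervalIntegrable 0 t)
      ((ae_restrict_mem measurableSet_Ioi).mono fun t (ht : 0 < t) => hg_nn t ht.le)]
  congr 1
  refine setLIntegral_congr_fun measurableSet_Ioi fun t (ht : 0 < t) => ?_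
  rw [ENNReal.ofReal_mul measureReal_nonneg, measureReal_def,
    ENNReal.ofReal_toReal (hf.measure_gt_lt_top ht).ne]

end MeasureTheory

lemma intervalIntegral_mul_one_sub_exp_neg_mul (ρ l : ℝ) :
    ∫ t in 0..l, ρ * (1 - exp (-(ρ * t))) = ρ * l - (1 - exp (-(ρ * l))) := by
  have hderiv : ∀ t ∈ uIcc 0 l,
      HasDerivAt (fun s => ρ * s + exp (-(ρ * s))) (ρ * (1 - exp (-(ρ * t)))) t := fun t _ => by
    have hlin : HasDerivAt (fun s => ρ * s) ρ t := by simpa using (hasDerivAt_id t).const_mul ρ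
    have hneg : HasDerivAt (fun s => -(ρ * s)) (-ρ) t := by
      simpa using (hasDerivAt_id t).const_mul (-ρ)
    exact (hlin.add hneg.exp).congr_deriv (by ring)
  rw [intervalIntegral.integral_eq_sub_of_hasDerivAt hderiv
    (Continuous.intervalIntegrable (by fun_prop) _ _)]
  simp only [mul_zero, neg_zero, exp_zero, zero_add]
  ring

section TailMeasure

variable {ν : Measure ℝ}

lemma ae_pos_of_measure_Iic_zero (hν0 : ν (Iic 0) = 0) : ∀ᵐ l ∂ν, 0 < l :=
  (measure_eq_zero_iff_ae_notMem.1 hν0).mono fun _ hl => not_le.1 hl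

lemma integral_one_sub_exp_neg_mul_eq (hν0 : ν (Iic 0) = 0)
    (hint : Integrable (fun l : ℝ => l) ν) {ρ : ℝ} (hρ : 0 < ρ) :
    ∫ l, (1 - exp (-(ρ * l))) ∂ν
      = ρ * ∫ l, l ∂ν - ρ * ∫ x in Ioi 0, (1 - exp (-(ρ * x))) * ν.real (Ioi x) := by
  have hpos := ae_pos_of_measure_Iic_zero hν0
  have hlayer := hint.integral_intervalIntegral_eq_integral_measureReal_lt_mul
    (hpos.mono fun _ hl => hl.le) (by fun_prop : Continuous fun t => ρ * (1 - exp (-(ρ * t))))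
    fun t ht => mul_nonneg hρ.le (one_sub_exp_neg_nonneg (mul_nonneg hρ.le ht))
  simp only [intervalIntegral_mul_one_sub_exp_neg_mul] at hlayer
  have hexp : Integrable (fun l => 1 - exp (-(ρ * l))) ν :=
    (hint.const_mul ρ).mono' (by fun_prop) (hpos.mono fun l hl => by
      rw [norm_eq_abs]; exact abs_one_sub_exp_neg_le_self (mul_nonneg hρ.le hl.le))
  rw [integral_sub (hint.const_mul ρ) hexp, integral_const_mul] at hlayer
  have hswap : ∫ t in Ioi 0, ν.real {a | t < a} * (ρ * (1 - exp (-(ρ * t))))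
      = ρ * ∫ x in Ioi 0, (1 - exp (-(ρ * x))) * ν.real (Ioi x) := by
    rw [← integral_const_mul]
    exact integral_congr_ae (Eventually.of_forall fun t => by simp only [Ioi]; ring)
  linarith

lemma integrableOn_measureReal_Ioi (hν0 : ν (Iic 0) = 0)
    (hint : Integrable (fun l : ℝ => l) ν) :
    IntegrableOn (fun x => ν.real (Ioi x)) (Ioi 0) := by
  have hanti : Antitone fun x => ν (Ioi x) := fun _ _ h => measure_mono (Ioi_subset_Ioi h)
  refine ⟨hanti.measurable.ennreal_toReal.aestronglyMeasurable, ?_⟩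
  calc ∫⁻ x in Ioi 0, ‖ν.real (Ioi x)‖ₑ
      ≤ ∫⁻ x in Ioi 0, ν (Ioi x) := lintegral_mono fun x => by
        rw [Real.enorm_of_nonneg measureReal_nonneg]; exact ENNReal.ofReal_toReal_le
    _ = ∫⁻ l, ENNReal.ofReal l ∂ν := (lintegral_eq_lintegral_meas_lt ν
        ((ae_pos_of_measure_Iic_zero hν0).mono fun _ hl => hl.le) aemeasurable_id).symm
    _ < ⊤ := hint.lintegral_lt_top

lemma Psi_eq_tail_integral (hν0 : ν (Iic 0) = 0) (hint : Integrable (fun l : ℝ => l) ν)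
    (t : ℝ) {ρ : ℝ} (hρ : 0 < ρ) :
    Psi ν t ρ = -((1 - (∫ l, l ∂ν) * t) * ρ)
      - t * ρ * ∫ x in Ioi 0, (1 - exp (-(ρ * x))) * ν.real (Ioi x) := by
  rw [Psi, integral_one_sub_exp_neg_mul_eq hν0 hint hρ]
  ring

end TailMeasure

lemma tendsto_one_sub_mul_nhdsLT_inv {m : ℝ} (hm : 0 < m) :
    Tendsto (fun t => 1 - m * t) (𝓝[<] (1 / m)) (𝓝[>] 0) := by
  refine tendsto_nhdsWithin_iff.2 ⟨?_, eventually_nhdsWithin_of_forall fun t (ht : t < 1 / m) => ?_⟩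
  · refine ((by fun_prop : Continuous fun t : ℝ => 1 - m * t).tendsto' (1 / m) 0 ?_)
      |>.mono_left nhdsWithin_le_nhds
    field_simp; ring
  · rw [lt_div_iff₀ hm, mul_comm] at ht
    exact sub_pos.2 ht

section Rescaling

variable {y : ℝ}

lemma tendsto_mul_div_log_one_div_nhdsGT (hy : 0 < y) :
    Tendsto (fun ε => ε * y / log (1 / ε)) (𝓝[>] 0) (𝓝[>] 0) := by
  refine tendsto_nhdsWithin_iff.2 ⟨?_, ?_⟩
  · have hεy : Tendsto (fun ε : ℝ => ε * y) (𝓝[>] 0) (𝓝 0) :=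
      ((continuous_id.mul continuous_const).tendsto' 0 0 (zero_mul y)).mono_left
        nhdsWithin_le_nhds
    have h := hεy.mul tendsto_log_one_div_nhdsGT_zero.inv_tendsto_atTop
    rw [mul_zero] at h
    exact h.congr fun ε => (div_eq_mul_inv _ _).symm
  · filter_upwards [self_mem_nhdsWithin, tendsto_log_one_div_nhdsGT_zero.eventually_gt_atTop 0]
      with ε (hε : 0 < ε) hL
    exact div_pos (mul_pos hε hy) hL

lemma tendsto_mul_log_one_div_div (hy : 0 < y) :
    Tendsto (fun ε => ε * y / log (1 / ε) * log (1 / (ε * y / log (1 / ε))) / ε)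
      (𝓝[>] 0) (𝓝 y) := by
  have hu : Tendsto (fun u => y * (log u / u + 1 - log y / u)) atTop (𝓝 y) := by
    have hlog : Tendsto (fun u => log u / u) atTop (𝓝 0) := by
      simpa using isLittleO_log_id_atTop.tendsto_div_nhds_zero
    simpa using ((hlog.add_const 1).sub (tendsto_const_nhds.div_atTop tendsto_id)).const_mul y
  refine (hu.comp tendsto_log_one_div_nhdsGT_zero).congr' ?_
  filter_upwards [self_mem_nhdsWithin, tendsto_log_one_div_nhdsGT_zero.eventually_gt_atTop 0]
    with ε (hε : 0 < ε) hL
  have hlogε : log ε = -log (1 / ε) := by rw [one_div, log_inv, neg_neg]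
  rw [Function.comp_apply, one_div_div, log_div hL.ne' (by positivity), log_mul hε.ne' hy.ne',
    hlogε]
  field_simp
  ring

end Rescaling

/-- With `ε = 1 - mt`, `L = L_t` and `l = log (1/ρ)`, this splits the rescaled `Ψ^(t)(ρ)` into
`T(ρ) / (ρ log(1/ρ)) → C` and `ρ log(1/ρ) / ε → y`. -/
lemma mul_inv_sq_mul_neg_sub_eq {ε L y t T l : ℝ} (hε : ε ≠ 0) (hL : L ≠ 0) (hy : y ≠ 0)
    (hl : l ≠ 0) :
    L * (ε ^ 2)⁻¹ * (-(ε * (ε * y / L)) - t * (ε * y / L) * T)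
      = -y - t * y * (T / (ε * y / L * l)) * (ε * y / L * l / ε) := by
  field_simp

theorem Psi_rescaled_limit_index_two_general
    (ν : Measure ℝ) (hν0 : ν (Set.Iic 0) = 0)
    (hint : Integrable (fun l : ℝ => l) ν)
    (m : ℝ) (hm : m = ∫ l, l ∂ν) (hmpos : 0 < m)
    (C : ℝ)
    (htail : Tendsto (fun x : ℝ => x ^ 2 * (ν (Set.Ioi x)).toReal)
      atTop (nhds C))
    (y : ℝ) (hy : 0 ≤ y) :
    Tendsto
      (fun t : ℝ =>
        Real.log (1 / (1 - m * t)) * ((1 - m * t) ^ 2)⁻¹ *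
          Psi ν t ((1 - m * t) * y / Real.log (1 / (1 - m * t))))
      (nhdsWithin (1 / m) (Set.Iio (1 / m)))
      (nhds (-y - (C / m) * y ^ 2)) := by
  rcases hy.eq_or_lt with rfl | hy
  · simp [Psi]
  have hε := tendsto_one_sub_mul_nhdsLT_inv hmpos
  have hρ := (tendsto_mul_div_log_one_div_nhdsGT hy).comp hε
  have hF := (tendsto_integral_one_sub_exp_neg_mul_mul_div
    (integrableOn_measureReal_Ioi hν0 hint) htail).comp hρ
  have hR := (tendsto_mul_log_one_div_div hy).comp hε
  have ht : Tendsto (fun t : ℝ => t) (𝓝[<] (1 / m)) (𝓝 (1 / m)) := nhdsWithin_le_nhds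
  have hlim := (tendsto_const_nhds (x := -y)).sub (((ht.mul_const y).mul hF).mul hR)
  rw [show -y - 1 / m * y * C * y = -y - C / m * y ^ 2 by ring] at hlim
  refine hlim.congr' ?_
  filter_upwards [hε (Ioo_mem_nhdsGT one_pos), hρ (Ioo_mem_nhdsGT one_pos)]
    with t ⟨hε₀, hε₁⟩ ⟨hρ₀, hρ₁⟩
  simp only [Function.comp_apply] at hε₀ hε₁ hρ₀ hρ₁ ⊢
  rw [Psi_eq_tail_integral hν0 hint t hρ₀, ← hm]
  exact (mul_inv_sq_mul_neg_sub_eq hε₀.ne' (log_pos (one_lt_one_div hε₀ hε₁)).ne' hy.ne'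
    (log_pos (one_lt_one_div hρ₀ hρ₁)).ne').symm

/-- Let `ν` be a measure on `(0,∞)` with finite positive mean `m` whose tail satisfies
`ν̄(x) ~ C x^{-2}` as `x → ∞`, with `C > 0`. Then for every `y ≥ 0`,
`lim_{t→(1/m)⁻} L_t (1-mt)⁻² Ψ^(t)((1-mt) y / L_t) = -y - (C/m) y²`,
where `L_t = log(1/(1-mt))`. -/
theorem Psi_rescaled_limit_index_two
    (ν : Measure ℝ) (hν0 : ν (Set.Iic 0) = 0)
    (hint : Integrable (fun l : ℝ => l) ν)
    (m : ℝ) (hm : m = ∫ l, l ∂ν) (hmpos : 0 < m)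
    (C : ℝ) (hC : 0 < C)
    (htail : Tendsto (fun x : ℝ => x ^ 2 * (ν (Set.Ioi x)).toReal)
      atTop (nhds C))
    (y : ℝ) (hy : 0 ≤ y) :
    Tendsto
      (fun t : ℝ =>
        Real.log (1 / (1 - m * t)) * ((1 - m * t) ^ 2)⁻¹ *
          Psi ν t ((1 - m * t) * y / Real.log (1 / (1 - m * t))))
      (nhdsWithin (1 / m) (Set.Iio (1 / m)))
      (nhds (-y - (C / m) * y ^ 2)) :=
  Psi_rescaled_limit_index_two_general ν hν0 hint m hm hmpos C htail y hy
end

section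
/- If ν has finite second moment m₂ = ∫_0^∞ l² ν(dl) < ∞ and λ > 0, then for every y ≥ 0, lim_{x→∞} x Ψ^{(t_x)}(y/√x) = −λ y − (m₂/(2m)) y², where t_x = (1 − λ/√x)/m (defined for x large enough that t_x ∈ [0, 1/m)). -/
/-!
Write `ρ = y / √x` and `φ(u) = e^{-u} - 1 + u`. Since `t_x m = 1 - λ/√x`, the first-order part
`ρ l` of `1 - e^{-ρ l}` contributes `t_x ρ m = ρ - λ y / x`, which cancels the drift `-ρ` up to
`-λ y / x`; hence `x Ψ^{(t_x)}(ρ) = -λ y - t_x ∫ x φ(y l / √x) ν(dl)`.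
Since `φ(u) = u²/2 + O(u³)` near `0` and `0 ≤ φ(u) ≤ u²` for `u ≥ 0`, dominated convergence
(with dominating function `y² l²`) gives `∫ x φ(y l / √x) ν(dl) → y² m₂ / 2`.
-/

open MeasureTheory Filter

open Topology Real

noncomputable def expNegRem (u : ℝ) : ℝ := exp (-u) - 1 + u

lemma expNegRem_nonneg (u : ℝ) : 0 ≤ expNegRem u := by
  have := one_sub_le_exp_neg u
  unfold expNegRem; linarith

lemma expNegRem_le_sq {u : ℝ} (hu : 0 ≤ u) : expNegRem u ≤ u ^ 2 := by
  rcases le_or_gt u 1 with hu1 | hu1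
  · have h := abs_exp_sub_one_sub_id_le (x := -u) (by rw [abs_neg, abs_of_nonneg hu]; exact hu1)
    rw [neg_sq, sub_neg_eq_add] at h
    exact (le_abs_self _).trans h
  · have : exp (-u) ≤ 1 := exp_le_one_iff.2 (by linarith)
    unfold expNegRem; nlinarith

lemma abs_expNegRem_sub_le {u : ℝ} (hu : |u| ≤ 1) :
    |expNegRem u - u ^ 2 / 2| ≤ 2 / 9 * |u| ^ 3 := by
  have h := exp_bound (x := -u) (by rwa [abs_neg]) (n := 3) (by norm_num)
  have hsum : ∑ i ∈ Finset.range 3, (-u) ^ i / (Nat.factorial i) = 1 - u + u ^ 2 / 2 := by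
    simp only [Finset.sum_range_succ, Finset.sum_range_zero, Nat.factorial]; push_cast; ring
  rw [hsum, abs_neg] at h
  calc |expNegRem u - u ^ 2 / 2| = |exp (-u) - (1 - u + u ^ 2 / 2)| := by
        unfold expNegRem; ring_nf
    _ ≤ |u| ^ 3 * ((3 : ℕ).succ / ((3 : ℕ).factorial * 3)) := h
    _ = 2 / 9 * |u| ^ 3 := by norm_num [Nat.factorial]; ring

lemma mul_expNegRem_div_sqrt_sub_le (c : ℝ) {x : ℝ} (hx : c ^ 2 ≤ x) (hx0 : 0 < x) :
    |x * expNegRem (c / √x) - c ^ 2 / 2| ≤ 2 / 9 * |c| ^ 3 / √x := by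
  have hs : 0 < √x := sqrt_pos.2 hx0
  have hu : |c / √x| ≤ 1 := by
    rw [abs_div, abs_of_pos hs, div_le_one hs, ← sqrt_sq_eq_abs]
    exact sqrt_le_sqrt hx
  have hsq : √x ^ 2 = x := sq_sqrt hx0.le
  have hx_sq : x * ((c / √x) ^ 2 / 2) = c ^ 2 / 2 := by
    rw [div_pow, hsq]; field_simp
  have hx_cube : x * (2 / 9 * |c / √x| ^ 3) = 2 / 9 * |c| ^ 3 / √x := by
    rw [abs_div, abs_of_pos hs, div_pow, pow_succ √x 2, hsq]; field_simp
  calc |x * expNegRem (c / √x) - c ^ 2 / 2|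
      = x * |expNegRem (c / √x) - (c / √x) ^ 2 / 2| := by
        rw [← hx_sq, ← mul_sub, abs_mul, abs_of_pos hx0]
    _ ≤ x * (2 / 9 * |c / √x| ^ 3) := by gcongr; exact abs_expNegRem_sub_le hu
    _ = 2 / 9 * |c| ^ 3 / √x := hx_cube

lemma tendsto_mul_expNegRem_div_sqrt (c : ℝ) :
    Tendsto (fun x => x * expNegRem (c / √x)) atTop (𝓝 (c ^ 2 / 2)) := by
  rw [← tendsto_sub_nhds_zero_iff]
  refine squeeze_zero_norm' ?_
    ((tendsto_const_nhds (x := 2 / 9 * |c| ^ 3)).div_atTop tendsto_sqrt_atTop)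
  filter_upwards [eventually_ge_atTop (c ^ 2), eventually_gt_atTop 0] with x hx hx0
  exact mul_expNegRem_div_sqrt_sub_le c hx hx0

lemma tendsto_integral_mul_expNegRem {ν : Measure ℝ} (hν : ∀ᵐ l ∂ν, 0 ≤ l)
    (hint2 : Integrable (fun l => l ^ 2) ν) {y : ℝ} (hy : 0 ≤ y) :
    Tendsto (fun x => ∫ l, x * expNegRem (y / √x * l) ∂ν) atTop
      (𝓝 (y ^ 2 / 2 * ∫ l, l ^ 2 ∂ν)) := by
  rw [← integral_const_mul]
  refine tendsto_integral_filter_of_dominated_convergence (fun l => y ^ 2 * l ^ 2)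
    (.of_forall fun x => by unfold expNegRem; fun_prop) ?_ (hint2.const_mul _)
    (.of_forall fun l => ?_)
  · filter_upwards [eventually_gt_atTop 0] with x hx
    filter_upwards [hν] with l hl
    have hsq : x * (y / √x * l) ^ 2 = y ^ 2 * l ^ 2 := by
      rw [mul_pow, div_pow, sq_sqrt hx.le]; field_simp
    rw [norm_mul, norm_of_nonneg hx.le, norm_of_nonneg (expNegRem_nonneg _), ← hsq]
    gcongr
    exact expNegRem_le_sq (by positivity)
  · simp only [div_mul_eq_mul_div]
    convert tendsto_mul_expNegRem_div_sqrt (y * l) using 2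
    ring

lemma integrable_one_sub_exp_neg_mul {ν : Measure ℝ} (hν : ∀ᵐ l ∂ν, 0 ≤ l)
    (hint : Integrable (fun l : ℝ => l) ν) {ρ : ℝ} (hρ : 0 ≤ ρ) :
    Integrable (fun l => 1 - exp (-(ρ * l))) ν := by
  refine (hint.const_mul ρ).mono' (by fun_prop) ?_
  filter_upwards [hν] with l hl
  have h1 : exp (-(ρ * l)) ≤ 1 := exp_le_one_iff.2 (neg_nonpos.2 (mul_nonneg hρ hl))
  have h2 := one_sub_le_exp_neg (ρ * l)
  rw [norm_of_nonneg (by linarith)]; linarith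

lemma Psi_eq_sub_integral_expNegRem {ν : Measure ℝ} (hν : ∀ᵐ l ∂ν, 0 ≤ l)
    (hint : Integrable (fun l : ℝ => l) ν) (t : ℝ) {ρ : ℝ} (hρ : 0 ≤ ρ) :
    Psi ν t ρ = -ρ + t * (ρ * ∫ l, l ∂ν - ∫ l, expNegRem (ρ * l) ∂ν) := by
  have hsplit : (fun l => expNegRem (ρ * l)) = fun l => ρ * l - (1 - exp (-(ρ * l))) := by
    funext l; unfold expNegRem; ring
  rw [Psi, hsplit, integral_sub (hint.const_mul ρ) (integrable_one_sub_exp_neg_mul hν hint hρ),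
    integral_const_mul]
  ring

lemma mul_Psi_window_eq {ν : Measure ℝ} (hν : ∀ᵐ l ∂ν, 0 ≤ l)
    (hint : Integrable (fun l : ℝ => l) ν) {m : ℝ} (hm : m = ∫ l, l ∂ν) (hm0 : m ≠ 0)
    (lam : ℝ) {y : ℝ} (hy : 0 ≤ y) {x : ℝ} (hx : 0 < x) :
    x * Psi ν ((1 - lam / √x) / m) (y / √x) =
      -(lam * y) - (1 - lam / √x) / m * ∫ l, x * expNegRem (y / √x * l) ∂ν := by
  obtain ⟨s, hs, rfl⟩ : ∃ s, 0 < s ∧ x = s ^ 2 := ⟨√x, sqrt_pos.2 hx, (sq_sqrt hx.le).symm⟩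
  rw [sqrt_sq hs.le, Psi_eq_sub_integral_expNegRem hν hint _ (by positivity), ← hm,
    integral_const_mul]
  field_simp
  ring

theorem Psi_window_limit_finite_second_moment_general
    (ν : Measure ℝ) (hν0 : ν (Set.Iic 0) = 0)
    (hint : Integrable (fun l : ℝ => l) ν)
    (m : ℝ) (hm : m = ∫ l, l ∂ν) (hmpos : 0 < m)
    (hint2 : Integrable (fun l : ℝ => l ^ 2) ν)
    (m2 : ℝ) (hm2 : m2 = ∫ l, l ^ 2 ∂ν)
    (lam : ℝ)
    (y : ℝ) (hy : 0 ≤ y) :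
    Tendsto
      (fun x : ℝ =>
        x * Psi ν ((1 - lam / Real.sqrt x) / m) (y / Real.sqrt x))
      atTop (nhds (-(lam * y) - (m2 / (2 * m)) * y ^ 2)) := by
  have hν : ∀ᵐ l ∂ν, 0 ≤ l :=
    ae_iff.2 (measure_mono_null (fun l (hl : ¬ 0 ≤ l) => (not_le.1 hl).le) hν0)
  have ht : Tendsto (fun x => (1 - lam / √x) / m) atTop (𝓝 (1 / m)) := by
    simpa using ((tendsto_const_nhds.div_atTop tendsto_sqrt_atTop).const_sub 1).div_const m
  have hlim := tendsto_const_nhds (x := -(lam * y)).sub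
    (ht.mul (tendsto_integral_mul_expNegRem hν hint2 hy))
  rw [← hm2, show -(lam * y) - 1 / m * (y ^ 2 / 2 * m2) = -(lam * y) - m2 / (2 * m) * y ^ 2 by
    ring] at hlim
  refine hlim.congr' ?_
  filter_upwards [eventually_gt_atTop 0] with x hx
  exact (mul_Psi_window_eq hν hint hm hmpos.ne' lam hy hx).symm

/-- If `ν` (a measure on `(0,∞)` with finite positive mean `m`) has finite second
moment `m₂` and `λ > 0`, then for every `y ≥ 0`,
`lim_{x→∞} x Ψ^(t_x)(y/√x) = -λ y - (m₂/(2m)) y²`, where `t_x = (1 - λ/√x)/m`. -/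
theorem Psi_window_limit_finite_second_moment
    (ν : Measure ℝ) (hν0 : ν (Set.Iic 0) = 0)
    (hint : Integrable (fun l : ℝ => l) ν)
    (m : ℝ) (hm : m = ∫ l, l ∂ν) (hmpos : 0 < m)
    (hint2 : Integrable (fun l : ℝ => l ^ 2) ν)
    (m2 : ℝ) (hm2 : m2 = ∫ l, l ^ 2 ∂ν)
    (lam : ℝ) (hlam : 0 < lam)
    (y : ℝ) (hy : 0 ≤ y) :
    Tendsto
      (fun x : ℝ =>
        x * Psi ν ((1 - lam / Real.sqrt x) / m) (y / Real.sqrt x))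
      atTop (nhds (-(lam * y) - (m2 / (2 * m)) * y ^ 2)) :=
  Psi_window_limit_finite_second_moment_general ν hν0 hint m hm hmpos hint2 m2 hm2 lam y hy
end
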